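/- The algebra A = End(⊕_{z∈θ} P(z) ⊕ P(0)) of endomorphisms of the direct sum of a complete set of indecomposable projectives in Rep(P,θ) is a right peak algebra: the socle of A as a right A-module is a direct sum of copies of the simple projective module e₀A, and e₀A is the unique simple projective right A-module up to isomorphism. -/

import Mathlib

open scoped Classical

/-! ## Posets with involution and their vector-space representations -/

structure PosetInv (P : Type) [PartialOrder P] where
  σ : P → P
  invol : ∀ x, σ (σ x) = x

namespace PosetInv

variable {P : Type} [PartialOrder P]

/-- The equivalence relation whose classes are `{x, σ x}`. -/
def r (I : PosetInv P) (x y : P) : Prop := y = x ∨ y = I.σ x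

theorem r_refl (I : PosetInv P) (x : P) : I.r x x := Or.inl rfl

theorem r_symm (I : PosetInv P) {x y : P} (h : I.r x y) : I.r y x := by
  rcases h with rfl | rfl
  · exact Or.inl rfl
  · exact Or.inr (I.invol x).symm

theorem r_trans (I : PosetInv P) {x y z : P} (h1 : I.r x y) (h2 : I.r y z) : I.r x z := by
  rcases h1 with rfl | rfl
  · exact h2
  · rcases h2 with rfl | rfl
    · exact Or.inr rfl
    · rw [I.invol]; exact Or.inl rfl

def setoid (I : PosetInv P) : Setoid P := ⟨I.r, ⟨I.r_refl, I.r_symm, I.r_trans⟩⟩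

/-- The set `θ` of equivalence classes. -/
def Classes (I : PosetInv P) : Type := Quotient I.setoid

/-- The class `[x]` of an element. -/
def cls (I : PosetInv P) (x : P) : I.Classes := Quotient.mk I.setoid x

/-- The underlying set of elements of a class. -/
def carrier (I : PosetInv P) : I.Classes → Set P :=
  Quotient.lift (fun x => {y | I.r x y}) (by
    intro a b hab
    ext y
    constructor
    · intro h; exact I.r_trans (I.r_symm hab) h
    · intro h; exact I.r_trans hab h)

theorem mem_cls (I : PosetInv P) (x : P) : x ∈ I.carrier (I.cls x) := I.r_refl x

theorem sigma_mem_cls (I : PosetInv P) (x : P) : I.σ x ∈ I.carrier (I.cls x) := Or.inr rfl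

end PosetInv

open PosetInv

/-- A vector-space representation `V = (V₀, V_z)_{z ∈ θ}` of the poset with involution
`(P, θ)`:  a finite-dimensional space `V₀` together with, for each class `z`, a subspace
`V_z ⊆ V₀^z` (functions on the class), satisfying `V_y⁺ ⊆ V_x⁻` for `y < x`. -/
structure RepI (k : Type) [Field k] {P : Type} [PartialOrder P] (I : PosetInv P) where
  V0 : Type
  [acg : AddCommGroup V0]
  [mod : Module k V0]
  [fd : FiniteDimensional k V0]
  Vz : ∀ z : I.Classes, Submodule k (↥(I.carrier z) → V0)
  compat : ∀ ⦃x y : P⦄, y < x → ∀ h ∈ Vz (I.cls y),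
    (fun w : ↥(I.carrier (I.cls x)) => if (w : P) = x then h ⟨y, I.mem_cls y⟩ else 0)
      ∈ Vz (I.cls x)

attribute [instance] RepI.acg RepI.mod RepI.fd

variable {k : Type} [Field k] {P : Type} [PartialOrder P] {I : PosetInv P}

/-- A morphism of representations:  a linear map `φ : V₀ → W₀` with `φ^z(V_z) ⊆ W_z`. -/
@[ext]
structure Hom (V W : RepI k I) where
  φ : V.V0 →ₗ[k] W.V0
  maps : ∀ z, ∀ h ∈ V.Vz z, (fun w => φ (h w)) ∈ W.Vz z

namespace Hom

def comp {U V W : RepI k I} (g : Hom V W) (f : Hom U V) : Hom U W :=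
  ⟨g.φ ∘ₗ f.φ, fun z h hh => g.maps z _ (f.maps z h hh)⟩

def idH (V : RepI k I) : Hom V V := ⟨LinearMap.id, fun _ _ hh => hh⟩

def zeroH (V W : RepI k I) : Hom V W :=
  ⟨0, fun z _ _ => (W.Vz z).zero_mem⟩

end Hom

/-- `f` is a proper epimorphism:  surjective on `V₀` and on each `V_z`. -/
def ProperEpi {V W : RepI k I} (f : Hom V W) : Prop :=
  Function.Surjective f.φ ∧
    ∀ z, ∀ g ∈ W.Vz z, ∃ h ∈ V.Vz z, (fun w => f.φ (h w)) = g

/-- `f` is a proper monomorphism:  injective on `U₀`, and the elements of `V_z` all of whose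
coordinates lie in the image of `f` are exactly the images of elements of `U_z`. -/
def ProperMono {U V : RepI k I} (f : Hom U V) : Prop :=
  Function.Injective f.φ ∧
    ∀ z, ∀ h ∈ V.Vz z, (∀ w, h w ∈ LinearMap.range f.φ) →
      ∃ g ∈ U.Vz z, (fun w => f.φ (g w)) = h

/-- `(u, v)` is an `ε`-sequence:  `0 → U₀ → V₀ → W₀ → 0` and each
`0 → U_z → V_z → W_z → 0` is exact. -/
def IsEpsSeq {U V W : RepI k I} (u : Hom U V) (v : Hom V W) : Prop :=
  Function.Injective u.φ ∧ Function.Surjective v.φ ∧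
    LinearMap.range u.φ = LinearMap.ker v.φ ∧
    ∀ z, (∀ h ∈ W.Vz z, ∃ g ∈ V.Vz z, (fun w => v.φ (g w)) = h) ∧
      (∀ g ∈ V.Vz z, (fun w => v.φ (g w)) = 0 →
        ∃ p ∈ U.Vz z, (fun w => u.φ (p w)) = g)

variable {k : Type} [Field k] {P : Type} [PartialOrder P]

/-- The generating set of `P(w)_z` for a class `z = (a₁, b₁)`:  the functions
`(λ(a,a₁)e₁, 0), (0, λ(a,b₁)e₁), (λ(b,a₁)e₂, 0), (0, λ(b,b₁)e₂)`, where `e_c = g c` for `c`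
in the class of `a`; i.e. all `i_{x'} (g c)` with `c < x'`. -/
def genset (I : PosetInv P) (a : P) {V0 : Type} [AddCommGroup V0]
    (g : ↥(I.carrier (I.cls a)) → V0) (z : I.Classes) : Set (↥(I.carrier z) → V0) :=
  {f | ∃ (x' : ↥(I.carrier z)) (c : ↥(I.carrier (I.cls a))),
    (c : P) < (x' : P) ∧ f = fun w => if w = x' then g c else 0}

/-- `Q` is (isomorphic to) the representation `P(w)` for the class `w = [a]`:  there is a
basis of `Q₀` indexed by the class of `a` (so `e₁ = B a`, `e₂ = B b`, or a single `e` for a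
singleton class), `Q_w` is spanned by the generator `B` together with `genset`, and every
other `Q_z` is spanned by `genset`. -/
def IsPw {I : PosetInv P} (Q : RepI k I) (a : P) : Prop :=
  ∃ B : Module.Basis ↥(I.carrier (I.cls a)) k Q.V0,
    Q.Vz (I.cls a) = Submodule.span k ({⇑B} ∪ genset I a ⇑B (I.cls a)) ∧
    ∀ z, z ≠ I.cls a → Q.Vz z = Submodule.span k (genset I a ⇑B z)

/-- `Q` is (isomorphic to) the trivial representation `S = (k, 0)`. -/
def IsS {k : Type} [Field k] {P : Type} [PartialOrder P] {I : PosetInv P}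
    (Q : RepI k I) : Prop :=
  Module.finrank k Q.V0 = 1 ∧ ∀ z, Q.Vz z = ⊥

/-- Finite direct sums of representations, computed componentwise. -/
def dsum {k : Type} [Field k] {P : Type} [PartialOrder P] {I : PosetInv P}
    {ι : Type} [Fintype ι] (F : ι → RepI k I) : RepI k I where
  V0 := ∀ i, (F i).V0
  Vz := fun z =>
    { carrier := {h | ∀ i, (fun w => h w i) ∈ (F i).Vz z}
      add_mem' := fun hp hq i => ((F i).Vz z).add_mem (hp i) (hq i)
      zero_mem' := fun i => ((F i).Vz z).zero_mem
      smul_mem' := fun c _ hp i => ((F i).Vz z).smul_mem c (hp i) }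
  compat := by
    intro x y hxy h hh i
    have hc := (F i).compat hxy _ (hh i)
    have he : (fun w : ↥(I.carrier (I.cls x)) =>
        (if (w : P) = x then h ⟨y, I.mem_cls y⟩ else 0) i)
        = fun w : ↥(I.carrier (I.cls x)) =>
            if (w : P) = x then h ⟨y, I.mem_cls y⟩ i else 0 := by
      funext w; split <;> rfl
    show (fun w : ↥(I.carrier (I.cls x)) =>
        (if (w : P) = x then h ⟨y, I.mem_cls y⟩ else 0) i) ∈ (F i).Vz (I.cls x)
    rw [he]; exact hc

variable {k : Type} [Field k] {P : Type} [PartialOrder P] {I : PosetInv P}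

set_option synthInstance.maxHeartbeats 1000000

/-- The morphisms `V → W`, as a `k`-subspace of the space of linear maps `V₀ → W₀`. -/
def homSubmodule (V W : RepI k I) : Submodule k (V.V0 →ₗ[k] W.V0) where
  carrier := {φ | ∀ z, ∀ h ∈ V.Vz z, (fun w => φ (h w)) ∈ W.Vz z}
  add_mem' := by
    intro φ ψ hφ hψ z h hh
    have := (W.Vz z).add_mem (hφ z h hh) (hψ z h hh)
    exact this
  zero_mem' := fun z _ _ => (W.Vz z).zero_mem
  smul_mem' := by
    intro c φ hφ z h hh
    have := (W.Vz z).smul_mem c (hφ z h hh)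
    exact this

/-- The endomorphism algebra `End(V)` of a representation, as a subalgebra of
`End_k(V₀)`. -/
def endSubalgebra (U : RepI k I) : Subalgebra k (Module.End k U.V0) where
  carrier := {φ | ∀ z, ∀ h ∈ U.Vz z, (fun w => φ (h w)) ∈ U.Vz z}
  add_mem' := by
    intro φ ψ hφ hψ z h hh
    have := (U.Vz z).add_mem (hφ z h hh) (hψ z h hh)
    exact this
  mul_mem' := fun hφ hψ z h hh => hφ z _ (hψ z h hh)
  one_mem' := fun _ _ hh => hh
  zero_mem' := fun z _ _ => (U.Vz z).zero_mem
  algebraMap_mem' := by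
    intro c z h hh
    have := (U.Vz z).smul_mem c hh
    exact this

/-- Right action of `End(U)` on `Hom(U, V)` by precomposition, making `Hom(U, V)` a right
`End(U)`-module. -/
instance homModule (U V : RepI k I) :
    Module (↥(endSubalgebra U))ᵐᵒᵖ ↥(homSubmodule U V) where
  smul a f := ⟨f.1 ∘ₗ (a.unop : Module.End k U.V0),
    fun z h hh => f.2 z _ ((a.unop).2 z h hh)⟩
  one_smul f := Subtype.ext (by ext x; rfl)
  mul_smul a b f := Subtype.ext (by ext x; rfl)
  smul_zero a := Subtype.ext (by ext x; rfl)
  smul_add a f g := Subtype.ext (by ext x; rfl)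
  add_smul a b f := Subtype.ext (by ext x; exact map_add f.1 _ _)
  zero_smul f := Subtype.ext (by ext x; exact map_zero f.1)

/-- The socle of a module:  the sum of all its simple submodules. -/
def socle (R : Type) [Ring R] (M : Type) [AddCommGroup M] [Module R M] :
    Submodule R M :=
  sSup {S : Submodule R M | IsSimpleModule R ↥S}

/-- The idempotent of `End(⊕ᵢ F i)` given by projection onto the summand `i₀`. -/
noncomputable def projHom {ι : Type} [Fintype ι] (F : ι → RepI k I) (i₀ : ι) :
    ↥(endSubalgebra (dsum F)) := by
  refine ⟨{ toFun := fun v j => if j = i₀ then v j else 0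
            map_add' := ?_
            map_smul' := ?_ }, ?_⟩
  · intro v w; funext j
    show (if j = i₀ then (v + w) j else 0)
        = (if j = i₀ then v j else 0) + (if j = i₀ then w j else 0)
    by_cases h : j = i₀
    · simp only [if_pos h]; rfl
    · simp only [if_neg h, add_zero]
  · intro c v; funext j
    show (if j = i₀ then (c • v) j else 0) = c • (if j = i₀ then v j else 0)
    by_cases h : j = i₀
    · simp only [if_pos h]; rfl
    · simp only [if_neg h, smul_zero]
  · intro z h hh i
    by_cases hi : i = i₀
    · subst hi
      have he : (fun w => (fun j => if j = i then h w j else 0) i) = fun w => h w i := by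
        funext w; simp
      show (fun w => (fun j => if j = i then h w j else 0) i) ∈ (F i).Vz z
      rw [he]; exact hh i
    · have he : (fun w => (fun j => if j = i₀ then h w j else 0) i)
          = fun _ => (0 : (F i).V0) := by
        funext w; simp [hi]
      show (fun w => (fun j => if j = i₀ then h w j else 0) i) ∈ (F i).Vz z
      rw [he]; exact ((F i).Vz z).zero_mem

/-- The socle of `Hom(U, V)` is stable under the `k`-action, so it is in particular a
`k`-subspace of `Hom(U, V)`;  this is that subspace. -/
noncomputable def socK (U V : RepI k I) : Submodule k ↥(homSubmodule U V) where
  carrier := {f | f ∈ socle (↥(endSubalgebra U))ᵐᵒᵖ ↥(homSubmodule U V)}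
  add_mem' := fun ha hb => (socle _ _).add_mem ha hb
  zero_mem' := (socle _ _).zero_mem
  smul_mem' := by
    intro c f hf
    have h1 : c • f = (MulOpposite.op
        (⟨algebraMap k (Module.End k U.V0) c, (endSubalgebra U).algebraMap_mem c⟩ :
          ↥(endSubalgebra U))) • f := by
      apply Subtype.ext
      ext x
      show c • (f.1 x) = f.1 (c • x)
      rw [map_smul]
    rw [h1]
    exact Submodule.smul_mem
      (socle (↥(endSubalgebra U))ᵐᵒᵖ ↥(homSubmodule U V)) _ hf

/-- The action of the functor `H = Hom(⊕P(z) ⊕ S, −)` on a morphism `f : V → W`:  the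
induced map `Hom(U, V) → Hom(U, W)` of right `End(U)`-modules. -/
noncomputable def Hmap (U : RepI k I) {V W : RepI k I} (f : ↥(homSubmodule V W)) :
    ↥(homSubmodule U V) →ₗ[(↥(endSubalgebra U))ᵐᵒᵖ] ↥(homSubmodule U W) where
  toFun g := ⟨f.1 ∘ₗ g.1, fun z h hh => f.2 z _ (g.2 z h hh)⟩
  map_add' := by intro g₁ g₂; apply Subtype.ext; ext x; exact map_add f.1 _ _
  map_smul' := by intro a g; apply Subtype.ext; ext x; rfl

/-- Right multiplication by `a ∈ End(U)` on `Hom(U, V)`, as a `k`-linear map. -/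
noncomputable def rmulK {U V : RepI k I} (a : ↥(endSubalgebra U)) :
    ↥(homSubmodule U V) →ₗ[k] ↥(homSubmodule U V) where
  toFun f := ⟨f.1 ∘ₗ (a : Module.End k U.V0), fun z h hh => f.2 z _ (a.2 z h hh)⟩
  map_add' := by intro f g; apply Subtype.ext; ext x; rfl
  map_smul' := by intro c f; apply Subtype.ext; ext x; rfl

noncomputable instance classesFintype {P : Type} [PartialOrder P] [Fintype P]
    (I : PosetInv P) : Fintype I.Classes :=
  @Quotient.fintype P _ I.setoid fun _ _ => Classical.propDecidable _

/-!
Write `U = ⊕_z P(z) ⊕ S` and `e₀` for the projection onto `S`. A basis of `P(z)₀` lies in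
`P(z)_z`, while all subspaces of `S` vanish, so `Hom(P(z), S) = 0`: the `S`-component of an
endomorphism of `U` only sees the `S`-component of its argument, and since `S₀` is a line,
`e₀A = k e₀`. Hence `e₀A` is simple, and projective as a summand of `A`. Conversely every
linear map `U₀ → U₀` factoring through `S₀` is an endomorphism, so `t A e₀ ≠ 0` whenever
`t ≠ 0`. Then every simple right ideal `T` contains some `s` with `s e₀ ≠ 0`, and
`x ↦ s x` is a nonzero, hence bijective, map `e₀A → T`; a simple projective module embeds
into `A` through a linear form, so it is one of these `T`.
-/

section RightIdeals

open Submodule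

variable {R : Type} [Ring R]

/-- `x ↦ s * x`, since `MulOpposite.op x • s = s * x`. -/
def RightIdeal.mulLeft (S : Submodule Rᵐᵒᵖ R) {s : R} (hs : s ∈ S) : R →ₗ[Rᵐᵒᵖ] S :=
  LinearMap.toSpanSingleton Rᵐᵒᵖ S ⟨s, hs⟩ ∘ₗ (MulOpposite.opLinearEquiv Rᵐᵒᵖ).toLinearMap

theorem projective_span_singleton_of_isIdempotentElem {e : R} (he : IsIdempotentElem e) :
    Module.Projective Rᵐᵒᵖ (span Rᵐᵒᵖ {e}) := by
  have : Module.Projective Rᵐᵒᵖ R := .of_equiv (MulOpposite.opLinearEquiv Rᵐᵒᵖ).symm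
  refine .of_split (span Rᵐᵒᵖ {e}).subtype
    (RightIdeal.mulLeft _ (mem_span_singleton_self e)) ?_
  ext ⟨x, hx⟩
  obtain ⟨a, rfl⟩ := mem_span_singleton.mp hx
  show e * (e * a.unop) = e * a.unop
  rw [← mul_assoc, he.eq]

theorem isSimpleModule_span_singleton_of_forall_mul_eq_smul {k : Type} [Field k] [Algebra k R]
    {e : R} (he : e ≠ 0) (h : ∀ c : R, ∃ α : k, e * c = α • e) :
    IsSimpleModule Rᵐᵒᵖ (span Rᵐᵒᵖ {e}) := by
  have exists_smul_of_mem (x : R) : x ∈ span Rᵐᵒᵖ {e} → ∃ α : k, x = α • e := by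
    intro hx
    obtain ⟨a, rfl⟩ := mem_span_singleton.mp hx
    exact h a.unop
  refine isSimpleModule_iff_toSpanSingleton_surjective.mpr ⟨?_, ?_⟩
  · exact ⟨⟨0, ⟨e, mem_span_singleton_self e⟩, fun h0 => he (congr_arg Subtype.val h0).symm⟩⟩
  · rintro ⟨x, hx⟩ hx0 ⟨y, hy⟩
    obtain ⟨α, rfl⟩ := exists_smul_of_mem x hx
    obtain ⟨β, rfl⟩ := exists_smul_of_mem y hy
    have hα : α ≠ 0 := by rintro rfl; exact hx0 (by simp)
    refine ⟨MulOpposite.op (algebraMap k R (β * α⁻¹)), Subtype.ext ?_⟩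
    show α • e * algebraMap k R (β * α⁻¹) = β • e
    rw [← Algebra.commutes, ← Algebra.smul_def, smul_smul, inv_mul_cancel_right₀ hα]

theorem nonempty_linearEquiv_span_singleton_of_mul_ne_zero {e s : R}
    (S : Submodule Rᵐᵒᵖ R) [IsSimpleModule Rᵐᵒᵖ S] [IsSimpleModule Rᵐᵒᵖ (span Rᵐᵒᵖ {e})]
    (hs : s ∈ S) (hse : s * e ≠ 0) : Nonempty (S ≃ₗ[Rᵐᵒᵖ] span Rᵐᵒᵖ {e}) := by
  let Φ := RightIdeal.mulLeft S hs ∘ₗ (span Rᵐᵒᵖ {e}).subtype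
  have hΦ : Φ ≠ 0 := fun h0 =>
    hse (congr_arg Subtype.val (LinearMap.congr_fun h0 ⟨e, mem_span_singleton_self e⟩))
  exact ⟨(LinearEquiv.ofBijective Φ (LinearMap.bijective_of_ne_zero hΦ)).symm⟩

theorem exists_injective_linearMap_of_isSimpleModule_of_projective (M : Type)
    [AddCommGroup M] [Module Rᵐᵒᵖ M] [IsSimpleModule Rᵐᵒᵖ M] [Module.Projective Rᵐᵒᵖ M] :
    ∃ f : M →ₗ[Rᵐᵒᵖ] R, Function.Injective f := by
  have := IsSimpleModule.nontrivial Rᵐᵒᵖ M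
  obtain ⟨m, hm⟩ := exists_ne (0 : M)
  obtain ⟨φ, hφ⟩ := Module.Projective.exists_dual_ne_zero Rᵐᵒᵖ hm
  let f := (MulOpposite.opLinearEquiv Rᵐᵒᵖ).symm.toLinearMap ∘ₗ φ
  refine ⟨f, (LinearMap.injective_or_eq_zero f).resolve_right fun h0 => hφ ?_⟩
  simpa [f] using LinearMap.congr_fun h0 m

variable {e : R} [IsSimpleModule Rᵐᵒᵖ (span Rᵐᵒᵖ {e})]

/- The hypothesis `hpeak` below says that every nonzero right ideal `T` has `T e ≠ 0`, i.e.
`Hom(eR, T) ≠ 0`. -/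

theorem nonempty_linearEquiv_span_singleton_of_isSimpleModule
    (hpeak : ∀ t : R, t ≠ 0 → ∃ a, t * a * e ≠ 0)
    (S : Submodule Rᵐᵒᵖ R) [IsSimpleModule Rᵐᵒᵖ S] :
    Nonempty (S ≃ₗ[Rᵐᵒᵖ] span Rᵐᵒᵖ {e}) := by
  have := IsSimpleModule.nontrivial Rᵐᵒᵖ S
  obtain ⟨⟨t, ht⟩, ht0⟩ := exists_ne (0 : S)
  obtain ⟨a, ha⟩ := hpeak t fun h0 => ht0 (Subtype.ext h0)
  exact nonempty_linearEquiv_span_singleton_of_mul_ne_zero S (S.smul_mem (.op a) ht) ha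

theorem nonempty_linearEquiv_span_singleton_of_isSimpleModule_of_projective
    (hpeak : ∀ t : R, t ≠ 0 → ∃ a, t * a * e ≠ 0) (M : Type) [AddCommGroup M]
    [Module Rᵐᵒᵖ M] [IsSimpleModule Rᵐᵒᵖ M] [Module.Projective Rᵐᵒᵖ M] :
    Nonempty (M ≃ₗ[Rᵐᵒᵖ] span Rᵐᵒᵖ {e}) := by
  obtain ⟨f, hf⟩ := exists_injective_linearMap_of_isSimpleModule_of_projective (R := R) M
  let g := LinearEquiv.ofInjective f hf
  have := IsSimpleModule.congr g.symm
  obtain ⟨g'⟩ := nonempty_linearEquiv_span_singleton_of_isSimpleModule hpeak (LinearMap.range f)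
  exact ⟨g.trans g'⟩

end RightIdeals

section Representations

variable {k : Type} [Field k] {P : Type} [PartialOrder P] {I : PosetInv P}

theorem comp_mem_homSubmodule {U V W : RepI k I} {φ : V.V0 →ₗ[k] W.V0} {ψ : U.V0 →ₗ[k] V.V0}
    (hφ : φ ∈ homSubmodule V W) (hψ : ψ ∈ homSubmodule U V) : φ ∘ₗ ψ ∈ homSubmodule U W :=
  fun z h hh => hφ z _ (hψ z h hh)

theorem mem_homSubmodule_of_forall_Vz_eq_bot {V W : RepI k I} (hV : ∀ z, V.Vz z = ⊥)
    (φ : V.V0 →ₗ[k] W.V0) : φ ∈ homSubmodule V W := by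
  intro z h hh
  rw [hV z, Submodule.mem_bot] at hh
  subst hh
  convert (W.Vz z).zero_mem using 1
  funext w
  simp

/-- The basis of `Q₀` is itself an element of `Q_{[a]}`, so `φ` maps it into `W_{[a]} = 0`. -/
theorem eq_zero_of_mem_homSubmodule_of_isPw {Q W : RepI k I} {a : P} (hQ : IsPw Q a)
    (hW : ∀ z, W.Vz z = ⊥) {φ : Q.V0 →ₗ[k] W.V0} (hφ : φ ∈ homSubmodule Q W) : φ = 0 := by
  obtain ⟨B, hB, -⟩ := hQ
  have hBmem : ⇑B ∈ Q.Vz (I.cls a) := hB ▸ Submodule.subset_span (Or.inl rfl)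
  have hφB := hφ _ _ hBmem
  rw [hW, Submodule.mem_bot] at hφB
  exact B.ext fun w => congr_fun hφB w

end Representations

namespace dsum

variable {k : Type} [Field k] {P : Type} [PartialOrder P] {I : PosetInv P}
variable {ι : Type} [Fintype ι] (F : ι → RepI k I)

noncomputable def single (i : ι) : (F i).V0 →ₗ[k] (dsum F).V0 :=
  LinearMap.single k (fun j => (F j).V0) i

def proj (i : ι) : (dsum F).V0 →ₗ[k] (F i).V0 := LinearMap.proj i

theorem proj_comp_single_of_ne {i j : ι} (h : j ≠ i) : proj F i ∘ₗ single F j = 0 := by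
  ext x
  exact Pi.single_eq_of_ne (M := fun j => (F j).V0) h.symm x

@[simp]
theorem proj_comp_single (i : ι) : proj F i ∘ₗ single F i = LinearMap.id := by
  ext x
  exact Pi.single_eq_same (M := fun j => (F j).V0) i x

@[simp]
theorem proj_single (i : ι) (x : (F i).V0) : proj F i (single F i x) = x :=
  LinearMap.congr_fun (proj_comp_single F i) x

theorem single_mem_homSubmodule (i : ι) : single F i ∈ homSubmodule (F i) (dsum F) := by
  intro z h hh j
  by_cases hj : j = i
  · subst hj
    convert hh using 1
    funext w
    exact Pi.single_eq_same (M := fun j => (F j).V0) j (h w)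
  · convert ((F j).Vz z).zero_mem using 1
    funext w
    exact Pi.single_eq_of_ne (M := fun j => (F j).V0) hj (h w)

theorem linearMap_ext {M : Type} [AddCommGroup M] [Module k M]
    {f g : (dsum F).V0 →ₗ[k] M} (h : ∀ i, f ∘ₗ single F i = g ∘ₗ single F i) : f = g :=
  LinearMap.pi_ext' h

theorem proj_mem_homSubmodule (i : ι) : proj F i ∈ homSubmodule (dsum F) (F i) :=
  fun _ _ hh => hh i

theorem coe_projHom (i : ι) :
    (projHom F i : Module.End k (dsum F).V0) = single F i ∘ₗ proj F i := by
  refine LinearMap.ext fun v => funext fun j => ?_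
  show (if j = i then v j else 0) = Pi.single (M := fun j => (F j).V0) i (v i) j
  by_cases hj : j = i
  · subst hj
    simp
  · simp [hj]

variable {F} {i : ι}

theorem proj_comp_endSubalgebra
    (hF : ∀ j ≠ i, ∀ φ ∈ homSubmodule (F j) (F i), φ = 0) (c : endSubalgebra (dsum F)) :
    proj F i ∘ₗ (c : Module.End k (dsum F).V0) =
      (proj F i ∘ₗ (c : Module.End k (dsum F).V0) ∘ₗ single F i) ∘ₗ proj F i := by
  refine linearMap_ext F fun j => ?_
  by_cases hj : j = i
  · subst hj
    rw [LinearMap.comp_assoc _ (proj F j), proj_comp_single, LinearMap.comp_id,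
      LinearMap.comp_assoc]
  · have hc : (c : Module.End k (dsum F).V0) ∈ homSubmodule (dsum F) (dsum F) := c.2
    rw [LinearMap.comp_assoc _ (proj F i), proj_comp_single_of_ne F hj, LinearMap.comp_zero,
      LinearMap.comp_assoc]
    exact hF j hj _ (comp_mem_homSubmodule (proj_mem_homSubmodule F i)
      (comp_mem_homSubmodule hc (single_mem_homSubmodule F j)))

theorem projHom_mul_eq_smul (hF : ∀ j ≠ i, ∀ φ ∈ homSubmodule (F j) (F i), φ = 0)
    (hi : Module.finrank k (F i).V0 = 1) (c : endSubalgebra (dsum F)) :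
    ∃ α : k, projHom F i * c = α • projHom F i := by
  obtain ⟨α, hα, -⟩ := LinearMap.existsUnique_eq_smul_id_of_finrank_eq_one hi
    (proj F i ∘ₗ (c : Module.End k (dsum F).V0) ∘ₗ single F i)
  refine ⟨α, Subtype.ext ?_⟩
  rw [Subalgebra.coe_mul, Subalgebra.coe_smul, coe_projHom, Module.End.mul_eq_comp,
    LinearMap.comp_assoc, proj_comp_endSubalgebra hF c, hα]
  ext v
  simp

theorem projHom_ne_zero [Nontrivial (F i).V0] : projHom F i ≠ 0 := by
  obtain ⟨b, hb⟩ := exists_ne (0 : (F i).V0)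
  intro h0
  have := LinearMap.congr_fun (congr_arg Subtype.val h0) (single F i b)
  rw [coe_projHom, LinearMap.comp_apply, proj_single] at this
  exact hb (by simpa using congr_arg (proj F i) this)

theorem isIdempotentElem_projHom : IsIdempotentElem (projHom F i) := by
  refine Subtype.ext ?_
  rw [Subalgebra.coe_mul, coe_projHom, Module.End.mul_eq_comp, LinearMap.comp_assoc,
    ← LinearMap.comp_assoc (proj F i) (single F i), proj_comp_single, LinearMap.id_comp]

theorem exists_mul_mul_projHom_ne_zero (hi : ∀ z, (F i).Vz z = ⊥) [Nontrivial (F i).V0]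
    (t : endSubalgebra (dsum F)) (ht : t ≠ 0) : ∃ a, t * a * projHom F i ≠ 0 := by
  obtain ⟨u, hu⟩ : ∃ u, (t : Module.End k (dsum F).V0) u ≠ 0 := by
    by_contra! h
    exact ht (Subtype.ext (LinearMap.ext h))
  obtain ⟨b, hb⟩ := exists_ne (0 : (F i).V0)
  obtain ⟨f, hf⟩ := Module.Projective.exists_dual_ne_zero k hb
  -- `a v = f (v i) • u`, so `t * a * projHom F i` sends `single F i b` to `f b • t u`
  let a : endSubalgebra (dsum F) := ⟨f.smulRight u ∘ₗ proj F i,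
    comp_mem_homSubmodule (mem_homSubmodule_of_forall_Vz_eq_bot hi _) (proj_mem_homSubmodule F i)⟩
  refine ⟨a, fun h0 => smul_ne_zero hf hu ?_⟩
  have := LinearMap.congr_fun (congr_arg Subtype.val h0) (single F i b)
  rw [Subalgebra.coe_mul, Subalgebra.coe_mul, coe_projHom, Module.End.mul_apply,
    Module.End.mul_apply] at this
  simpa [a] using this

end dsum

theorem endomorphism_algebra_right_peak
    {k : Type} [Field k] {P : Type} [PartialOrder P] [Fintype P] {I : PosetInv P}
    (F : I.Classes ⊕ Unit → RepI k I)
    (hF1 : ∀ z : I.Classes, ∃ a : P, I.cls a = z ∧ IsPw (F (Sum.inl z)) a)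
    (hF2 : IsS (F (Sum.inr ()))) :
    -- `e₀A` is a simple projective right `A`-module
    IsSimpleModule (↥(endSubalgebra (dsum F)))ᵐᵒᵖ
      ↥(Submodule.span (↥(endSubalgebra (dsum F)))ᵐᵒᵖ
        {projHom F (Sum.inr ())}) ∧
    Module.Projective (↥(endSubalgebra (dsum F)))ᵐᵒᵖ
      ↥(Submodule.span (↥(endSubalgebra (dsum F)))ᵐᵒᵖ
        {projHom F (Sum.inr ())}) ∧
    -- every simple right submodule of `A` is isomorphic to `e₀A`, so `soc(A_A)` is a
    -- direct sum of copies of `e₀A`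
    (∀ S : Submodule (↥(endSubalgebra (dsum F)))ᵐᵒᵖ ↥(endSubalgebra (dsum F)),
      IsSimpleModule (↥(endSubalgebra (dsum F)))ᵐᵒᵖ ↥S →
        Nonempty (↥S ≃ₗ[(↥(endSubalgebra (dsum F)))ᵐᵒᵖ]
          ↥(Submodule.span (↥(endSubalgebra (dsum F)))ᵐᵒᵖ
            {projHom F (Sum.inr ())}))) ∧
    -- `e₀A` is the unique simple projective right `A`-module up to isomorphism
    (∀ (M : Type) [AddCommGroup M] [Module (↥(endSubalgebra (dsum F)))ᵐᵒᵖ M],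
      IsSimpleModule (↥(endSubalgebra (dsum F)))ᵐᵒᵖ M →
      Module.Projective (↥(endSubalgebra (dsum F)))ᵐᵒᵖ M →
        Nonempty (M ≃ₗ[(↥(endSubalgebra (dsum F)))ᵐᵒᵖ]
          ↥(Submodule.span (↥(endSubalgebra (dsum F)))ᵐᵒᵖ
            {projHom F (Sum.inr ())}))) := by
  obtain ⟨hrank, hbot⟩ := hF2
  have : Nontrivial (F (Sum.inr ())).V0 := Module.nontrivial_of_finrank_eq_succ hrank
  have hHom : ∀ j ≠ Sum.inr (), ∀ φ ∈ homSubmodule (F j) (F (Sum.inr ())), φ = 0 := by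
    rintro (z | ⟨⟩) hj φ hφ
    · obtain ⟨a, -, ha⟩ := hF1 z
      exact eq_zero_of_mem_homSubmodule_of_isPw ha hbot hφ
    · exact absurd rfl hj
  have hsimple := isSimpleModule_span_singleton_of_forall_mul_eq_smul
    (dsum.projHom_ne_zero (F := F) (i := Sum.inr ())) (dsum.projHom_mul_eq_smul hHom hrank)
  have hpeak := dsum.exists_mul_mul_projHom_ne_zero hbot
  exact ⟨hsimple, projective_span_singleton_of_isIdempotentElem dsum.isIdempotentElem_projHom,
    fun S _ => nonempty_linearEquiv_span_singleton_of_isSimpleModule hpeak S,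
    fun M _ _ _ _ => nonempty_linearEquiv_span_singleton_of_isSimpleModule_of_projective hpeak M⟩
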